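/- arXiv:2208.08311 — 2 statements merged into one kernel-verified Lean document; each statement's English description precedes it below -/
import Mathlib

section
/- Define the operator R on smooth mean-free vector fields v on 𝕋³ by (R v)^{kl} = ∂_k Δ⁻¹ v^l + ∂_l Δ⁻¹ v^k − (1/2)(δ_{kl} + ∂_k ∂_l Δ⁻¹) div Δ⁻¹ v. Then R v is symmetric, trace-free, and satisfies div(R v) = v. -/
/-- Partial derivative in the `i`-th coordinate direction of a scalar field on `ℝ³`. -/
noncomputable def pd (i : Fin 3) (f : (Fin 3 → ℝ) → ℝ) (x : Fin 3 → ℝ) : ℝ :=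
  fderiv ℝ f x (Pi.single i 1)

lemma pd_smooth {f : (Fin 3 → ℝ) → ℝ} (hf : ContDiff ℝ (⊤ : ℕ∞) f) (i : Fin 3) :
    ContDiff ℝ (⊤ : ℕ∞) (pd i f) :=
  (hf.fderiv_right (by simp)).clm_apply contDiff_const

lemma pd_comm {f : (Fin 3 → ℝ) → ℝ} (hf : ContDiff ℝ (⊤ : ℕ∞) f) (i j : Fin 3) (x : Fin 3 → ℝ) :
    pd i (pd j f) x = pd j (pd i f) x := by
  have hdf : Differentiable ℝ f := hf.differentiable (by simp)
  have hf' : ContDiff ℝ (⊤ : ℕ∞) (fderiv ℝ f) := hf.fderiv_right (by simp)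
  have h2 : HasFDerivAt (fderiv ℝ f) (fderiv ℝ (fderiv ℝ f) x) x :=
    (hf'.differentiable (by simp) x).hasFDerivAt
  have hsymm := second_derivative_symmetric (f' := fderiv ℝ f)
      (fun y => (hdf y).hasFDerivAt) h2 (Pi.single i 1) (Pi.single j 1)
  have key : ∀ a b : Fin 3,
      pd a (pd b f) x = fderiv ℝ (fderiv ℝ f) x (Pi.single a 1) (Pi.single b 1) := by
    intro a b
    have h3 := (ContinuousLinearMap.apply ℝ ℝ (Pi.single b (1:ℝ))).hasFDerivAt.comp x h2
    have h4 : pd b f = (⇑(ContinuousLinearMap.apply ℝ ℝ (Pi.single b (1:ℝ))) ∘ fderiv ℝ f) := rfl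
    simp [pd, h4, h3.fderiv]
  rw [key i j, key j i, hsymm]

lemma pd_add (i : Fin 3) {a b : (Fin 3 → ℝ) → ℝ} (ha : Differentiable ℝ a)
    (hb : Differentiable ℝ b) (x : Fin 3 → ℝ) :
    pd i (fun y => a y + b y) x = pd i a x + pd i b x := by
  simp [pd, fderiv_fun_add (ha x) (hb x)]

lemma pd_sub (i : Fin 3) {a b : (Fin 3 → ℝ) → ℝ} (ha : Differentiable ℝ a)
    (hb : Differentiable ℝ b) (x : Fin 3 → ℝ) :
    pd i (fun y => a y - b y) x = pd i a x - pd i b x := by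
  simp [pd, fderiv_fun_sub (ha x) (hb x)]

lemma pd_const_mul (i : Fin 3) (c : ℝ) {a : (Fin 3 → ℝ) → ℝ} (ha : Differentiable ℝ a)
    (x : Fin 3 → ℝ) :
    pd i (fun y => c * a y) x = c * pd i a x := by
  simp [pd, fderiv_const_mul (ha x) c]

lemma pd_sum (i : Fin 3) {g : Fin 3 → (Fin 3 → ℝ) → ℝ}
    (hg : ∀ j, Differentiable ℝ (g j)) (x : Fin 3 → ℝ) :
    pd i (fun y => ∑ j, g j y) x = ∑ j, pd i (g j) x := by
  simp [pd, fderiv_fun_sum (fun j _ => (hg j x))]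


/-- the operator
`(R v)^{kl} = ∂_k Δ⁻¹ v^l + ∂_l Δ⁻¹ v^k − (1/2)(δ_{kl} + ∂_k ∂_l Δ⁻¹) div Δ⁻¹ v`
on smooth mean-free vector fields `v` on the 3-torus.  Here `Δ⁻¹ v` is represented by a
smooth periodic mean-free field `Z` with `ΔZ = v`, and `Δ⁻¹ div Δ⁻¹ v = Δ⁻¹ div Z` by a
smooth periodic mean-free function `θ` with `Δθ = div Z`.  Then `R v` is symmetric,
trace-free, and `div (R v) = v`. -/
theorem R_symm_tracefree_and_right_inverse_div
    (v Z : (Fin 3 → ℝ) → (Fin 3 → ℝ)) (θ : (Fin 3 → ℝ) → ℝ)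
    (hv : ∀ i, ContDiff ℝ (⊤ : ℕ∞) (fun x => v x i))
    (hZ : ∀ i, ContDiff ℝ (⊤ : ℕ∞) (fun x => Z x i))
    (hθ : ContDiff ℝ (⊤ : ℕ∞) θ)
    (hvper : ∀ (x : Fin 3 → ℝ) (m : Fin 3 → ℤ), v (x + fun i => (m i : ℝ)) = v x)
    (hZper : ∀ (x : Fin 3 → ℝ) (m : Fin 3 → ℤ), Z (x + fun i => (m i : ℝ)) = Z x)
    (hθper : ∀ (x : Fin 3 → ℝ) (m : Fin 3 → ℤ), θ (x + fun i => (m i : ℝ)) = θ x)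
    (hvmean : ∀ i, (∫ x in Set.Icc (0 : Fin 3 → ℝ) 1, v x i) = 0)
    (hZmean : ∀ i, (∫ x in Set.Icc (0 : Fin 3 → ℝ) 1, Z x i) = 0)
    (hθmean : (∫ x in Set.Icc (0 : Fin 3 → ℝ) 1, θ x) = 0)
    (hZlap : ∀ x i, ∑ j, pd j (fun y => pd j (fun z => Z z i) y) x = v x i)
    (hθlap : ∀ x, ∑ j, pd j (fun y => pd j θ y) x = ∑ j, pd j (fun y => Z y j) x)
    (R : (Fin 3 → ℝ) → Matrix (Fin 3) (Fin 3) ℝ)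
    (hR : ∀ x k l, R x k l =
      pd k (fun y => Z y l) x + pd l (fun y => Z y k) x
        - (1 / 2) * ((if k = l then 1 else 0) * (∑ j, pd j (fun y => Z y j) x)
            + pd k (fun y => pd l θ y) x)) :
    (∀ x, (R x).transpose = R x) ∧
      (∀ x, ∑ k, R x k k = 0) ∧
      (∀ x l, ∑ k, pd k (fun y => R y k l) x = v x l) := by
  -- notation
  set S : (Fin 3 → ℝ) → ℝ := fun y => ∑ j, pd j (fun z => Z z j) y with hS
  have hSsm : ContDiff ℝ (⊤ : ℕ∞) S := by
    apply ContDiff.sum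
    intro j _
    exact pd_smooth (hZ j) j
  have hθpd : ∀ a b : Fin 3, ContDiff ℝ (⊤ : ℕ∞) (pd a (pd b θ)) :=
    fun a b => pd_smooth (pd_smooth hθ b) a
  refine ⟨?_, ?_, ?_⟩
  · -- symmetry
    intro x
    ext k l
    have hc := pd_comm hθ l k x
    simp only [Matrix.transpose_apply, hR]
    rw [hc]
    by_cases h : k = l
    · subst h; ring
    · rw [if_neg h, if_neg (fun hh => h hh.symm)]; ring
  · -- trace
    intro x
    have h := hθlap x
    simp only [hR, eq_self_iff_true, if_true]
    rw [Fin.sum_univ_three] at h ⊢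
    simp only [hS] at *
    rw [Fin.sum_univ_three] at h ⊢
    ring_nf
    ring_nf at h
    linarith
  · -- divergence
    intro x l
    have hZd : ∀ i, Differentiable ℝ (fun y => Z y i) := fun i => (hZ i).differentiable (by simp)
    have hpdZ : ∀ a b : Fin 3, ContDiff ℝ (⊤ : ℕ∞) (pd a (fun y => Z y b)) :=
      fun a b => pd_smooth (hZ b) a
    -- rewrite each summand
    have key : ∀ k, pd k (fun y => R y k l) x =
        pd k (pd k (fun y => Z y l)) x + pd k (pd l (fun y => Z y k)) x
          - (1/2) * ((if k = l then 1 else 0) * pd k S x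
              + pd k (pd k (pd l θ)) x) := by
      intro k
      have hfun : (fun y => R y k l) = fun y =>
          (pd k (fun z => Z z l) y + pd l (fun z => Z z k) y)
            - (1/2) * ((if k = l then 1 else 0) * S y + pd k (pd l θ) y) := by
        funext y; exact hR y k l
      rw [hfun]
      have d1 : Differentiable ℝ (fun y => pd k (fun z => Z z l) y + pd l (fun z => Z z k) y) :=
        ((hpdZ k l).differentiable (by simp)).add ((hpdZ l k).differentiable (by simp))
      have d2 : Differentiable ℝ (fun y => (if k = l then (1:ℝ) else 0) * S y + pd k (pd l θ) y) :=
        ((hSsm.differentiable (by simp)).const_mul _).add ((hθpd k l).differentiable (by simp))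
      rw [pd_sub k d1 (d2.const_mul _) x, pd_const_mul k _ d2 x,
        pd_add k ((hpdZ k l).differentiable (by simp)) ((hpdZ l k).differentiable (by simp)) x,
        pd_add k ((hSsm.differentiable (by simp)).const_mul _) ((hθpd k l).differentiable (by simp)) x,
        pd_const_mul k _ (hSsm.differentiable (by simp)) x]
    calc ∑ k, pd k (fun y => R y k l) x
        = ∑ k, (pd k (pd k (fun y => Z y l)) x + pd k (pd l (fun y => Z y k)) x
          - (1/2) * ((if k = l then 1 else 0) * pd k S x
              + pd k (pd k (pd l θ)) x)) := by
          exact Finset.sum_congr rfl (fun k _ => key k)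
      _ = v x l := by
          have hA : ∑ k, pd k (pd k (fun y => Z y l)) x = v x l := hZlap x l
          have hB : ∑ k, pd k (pd l (fun y => Z y k)) x = pd l S x := by
            rw [Finset.sum_congr rfl (fun k _ => pd_comm (hZ k) k l x)]
            rw [hS, ← pd_sum l (fun j => ((hpdZ j j).differentiable (by simp))) x]
          have hC : ∑ k, (if k = l then (1:ℝ) else 0) * pd k S x = pd l S x := by
            simp [Finset.sum_ite_eq]
          have hD : ∑ k, pd k (pd k (pd l θ)) x = pd l S x := by
            have step : ∀ k, pd k (pd k (pd l θ)) x = pd l (pd k (pd k θ)) x := by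
              intro k
              have e1 : pd k (pd l θ) = pd l (pd k θ) := funext (pd_comm hθ k l)
              rw [e1]
              exact pd_comm (pd_smooth hθ k) k l x
            rw [Finset.sum_congr rfl (fun k _ => step k)]
            rw [← pd_sum l (fun j => ((hθpd j j).differentiable (by simp))) x]
            have e2 : (fun y => ∑ j, pd j (pd j θ) y) = S := funext (fun y => hθlap y)
            rw [e2]
          rw [Finset.sum_sub_distrib, Finset.sum_add_distrib] at *
          rw [← Finset.mul_sum, Finset.sum_add_distrib, hA, hB, hC, hD]
          ring
end

section
/- Let Λ_v = {(12/13)e₁ ± (5/13)e₂, (5/13)e₁ ± (12/13)e₃, (12/13)e₂ ± (5/13)e₃} with associated orthonormal triples (k, k̄, k̄̄). Then the six symmetric rank-one matrices k̄ ⊗ k̄ span the 6-dimensional space of symmetric 3×3 matrices, and there exist ε_v > 0 and smooth positive functions a_{v,k} : B_{ε_v}(Id) → ℝ such that every symmetric matrix R with |R − Id| < ε_v admits the decomposition R = Σ_{k∈Λ_v} a_{v,k}(R) k̄ ⊗ k̄. -/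
/-- The outer product `(A ⊗ B)_{ij} = A_j B_i` of two vectors in `ℝ³`. -/
def otimes (A B : Fin 3 → ℝ) : Fin 3 → Fin 3 → ℝ := fun i j => A j * B i

/-- The identity matrix as an element of `Fin 3 → Fin 3 → ℝ`. -/
def idMat : Fin 3 → Fin 3 → ℝ := fun i j => if i = j then 1 else 0

/-- The (unit, rational) vectors `k̄` of the orthonormal triples `(k, k̄, k̄̄)` associated to
`Λ_v = {(12/13)e₁ ± (5/13)e₂, (5/13)e₁ ± (12/13)e₃, (12/13)e₂ ± (5/13)e₃}`. -/
noncomputable def kbarV : Fin 6 → Fin 3 → ℝ :=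
  ![![5/13, -(12/13), 0], ![5/13, 12/13, 0],
    ![12/13, 0, -(5/13)], ![12/13, 0, 5/13],
    ![0, 5/13, -(12/13)], ![0, 5/13, 12/13]]

/-- Explicit coefficient functions for the decomposition. -/
noncomputable def av : Fin 6 → (Fin 3 → Fin 3 → ℝ) → ℝ
  | 0, R => (625/35522)*R 0 0 + (10368/17761)*R 1 1 - (1800/17761)*R 2 2 - (169/120)*R 0 1
  | 1, R => (625/35522)*R 0 0 + (10368/17761)*R 1 1 - (1800/17761)*R 2 2 + (169/120)*R 0 1
  | 2, R => (10368/17761)*R 0 0 - (1800/17761)*R 1 1 + (625/35522)*R 2 2 - (169/120)*R 0 2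
  | 3, R => (10368/17761)*R 0 0 - (1800/17761)*R 1 1 + (625/35522)*R 2 2 + (169/120)*R 0 2
  | 4, R => -(1800/17761)*R 0 0 + (625/35522)*R 1 1 + (10368/17761)*R 2 2 - (169/120)*R 1 2
  | 5, R => -(1800/17761)*R 0 0 + (625/35522)*R 1 1 + (10368/17761)*R 2 2 + (169/120)*R 1 2


lemma kbarV0 : kbarV 0 = ![5/13, -(12/13), 0] := rfl
lemma kbarV1 : kbarV 1 = ![5/13, 12/13, 0] := rfl
lemma kbarV2 : kbarV 2 = ![12/13, 0, -(5/13)] := rfl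
lemma kbarV3 : kbarV 3 = ![12/13, 0, 5/13] := rfl
lemma kbarV4 : kbarV 4 = ![0, 5/13, -(12/13)] := rfl
lemma kbarV5 : kbarV 5 = ![0, 5/13, 12/13] := rfl

lemma av0 (R : Fin 3 → Fin 3 → ℝ) :
    av 0 R = (625/35522)*R 0 0 + (10368/17761)*R 1 1 - (1800/17761)*R 2 2 - (169/120)*R 0 1 := rfl
lemma av1 (R : Fin 3 → Fin 3 → ℝ) :
    av 1 R = (625/35522)*R 0 0 + (10368/17761)*R 1 1 - (1800/17761)*R 2 2 + (169/120)*R 0 1 := rfl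
lemma av2 (R : Fin 3 → Fin 3 → ℝ) :
    av 2 R = (10368/17761)*R 0 0 - (1800/17761)*R 1 1 + (625/35522)*R 2 2 - (169/120)*R 0 2 := rfl
lemma av3 (R : Fin 3 → Fin 3 → ℝ) :
    av 3 R = (10368/17761)*R 0 0 - (1800/17761)*R 1 1 + (625/35522)*R 2 2 + (169/120)*R 0 2 := rfl
lemma av4 (R : Fin 3 → Fin 3 → ℝ) :
    av 4 R = -(1800/17761)*R 0 0 + (625/35522)*R 1 1 + (10368/17761)*R 2 2 - (169/120)*R 1 2 := rfl
lemma av5 (R : Fin 3 → Fin 3 → ℝ) :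
    av 5 R = -(1800/17761)*R 0 0 + (625/35522)*R 1 1 + (10368/17761)*R 2 2 + (169/120)*R 1 2 := rfl

set_option maxHeartbeats 2000000 in
lemma av_decomp (R : Fin 3 → Fin 3 → ℝ) (hR : ∀ i j, R i j = R j i) :
    R = ∑ k : Fin 6, av k R • otimes (kbarV k) (kbarV k) := by
  funext i j
  have h10 := hR 1 0
  have h20 := hR 2 0
  have h21 := hR 2 1
  fin_cases i <;> fin_cases j <;>
    simp [Fin.sum_univ_six, av0, av1, av2, av3, av4, av5, kbarV0, kbarV1, kbarV2, kbarV3, kbarV4, kbarV5, otimes] <;>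
    (try rw [h10]) <;> (try rw [h20]) <;> (try rw [h21]) <;> ring

/-- Second Geometric Lemma: the six symmetric rank-one matrices `k̄ ⊗ k̄`,
`k ∈ Λ_v`, span the 6-dimensional space of symmetric `3×3` matrices, and there exist
`ε_v > 0` and smooth positive functions `a_{v,k}` on the ball `B_{ε_v}(Id)` such that every
symmetric `R` with `|R − Id| < ε_v` satisfies `R = Σ_{k∈Λ_v} a_{v,k}(R) k̄ ⊗ k̄` with
`a_{v,k} > 0`. -/
theorem second_geometric_lemma :
    (∀ R : Fin 3 → Fin 3 → ℝ, (∀ i j, R i j = R j i) →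
      R ∈ Submodule.span ℝ (Set.range fun k : Fin 6 => otimes (kbarV k) (kbarV k))) ∧
    ∃ ε : ℝ, 0 < ε ∧ ∃ a : Fin 6 → (Fin 3 → Fin 3 → ℝ) → ℝ,
      (∀ k, ContDiffOn ℝ (⊤ : ℕ∞) (a k) (Metric.ball idMat ε)) ∧
      (∀ k R, R ∈ Metric.ball idMat ε → 0 < a k R) ∧
      (∀ R ∈ Metric.ball idMat ε, (∀ i j, R i j = R j i) →
        R = ∑ k : Fin 6, a k R • otimes (kbarV k) (kbarV k)) := by
  constructor
  · intro R hR
    rw [av_decomp R hR]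
    exact Submodule.sum_mem _ fun k _ =>
      Submodule.smul_mem _ _ (Submodule.subset_span ⟨k, rfl⟩)
  · refine ⟨1/10, by norm_num, av, ?_, ?_, fun R _ hR => av_decomp R hR⟩
    · intro k
      apply ContDiff.contDiffOn
      fin_cases k
      · show ContDiff ℝ (⊤ : ℕ∞) fun R : Fin 3 → Fin 3 → ℝ =>
          (625/35522)*R 0 0 + (10368/17761)*R 1 1 - (1800/17761)*R 2 2 - (169/120)*R 0 1
        fun_prop
      · show ContDiff ℝ (⊤ : ℕ∞) fun R : Fin 3 → Fin 3 → ℝ =>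
          (625/35522)*R 0 0 + (10368/17761)*R 1 1 - (1800/17761)*R 2 2 + (169/120)*R 0 1
        fun_prop
      · show ContDiff ℝ (⊤ : ℕ∞) fun R : Fin 3 → Fin 3 → ℝ =>
          (10368/17761)*R 0 0 - (1800/17761)*R 1 1 + (625/35522)*R 2 2 - (169/120)*R 0 2
        fun_prop
      · show ContDiff ℝ (⊤ : ℕ∞) fun R : Fin 3 → Fin 3 → ℝ =>
          (10368/17761)*R 0 0 - (1800/17761)*R 1 1 + (625/35522)*R 2 2 + (169/120)*R 0 2
        fun_prop
      · show ContDiff ℝ (⊤ : ℕ∞) fun R : Fin 3 → Fin 3 → ℝ =>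
          -(1800/17761)*R 0 0 + (625/35522)*R 1 1 + (10368/17761)*R 2 2 - (169/120)*R 1 2
        fun_prop
      · show ContDiff ℝ (⊤ : ℕ∞) fun R : Fin 3 → Fin 3 → ℝ =>
          -(1800/17761)*R 0 0 + (625/35522)*R 1 1 + (10368/17761)*R 2 2 + (169/120)*R 1 2
        fun_prop
    · intro k R hRb
      have hb : ∀ i j : Fin 3, |R i j - idMat i j| < 1/10 := by
        intro i j
        have h1 : dist (R i j) (idMat i j) ≤ dist R idMat :=
          le_trans (dist_le_pi_dist (R i) (idMat i) j) (dist_le_pi_dist R idMat i)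
        rw [Real.dist_eq] at h1
        exact lt_of_le_of_lt h1 (Metric.mem_ball.mp hRb)
      have h00 := abs_lt.mp (hb 0 0); have h11 := abs_lt.mp (hb 1 1)
      have h22 := abs_lt.mp (hb 2 2); have h01 := abs_lt.mp (hb 0 1)
      have h02 := abs_lt.mp (hb 0 2); have h12 := abs_lt.mp (hb 1 2)
      norm_num [idMat, Fin.ext_iff] at h00 h11 h22 h01 h02 h12
      obtain ⟨h00l, h00r⟩ := h00
      obtain ⟨h11l, h11r⟩ := h11
      obtain ⟨h22l, h22r⟩ := h22
      obtain ⟨h01l, h01r⟩ := h01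
      obtain ⟨h02l, h02r⟩ := h02
      obtain ⟨h12l, h12r⟩ := h12
      fin_cases k
      · show (0:ℝ) <
          (625/35522)*R 0 0 + (10368/17761)*R 1 1 - (1800/17761)*R 2 2 - (169/120)*R 0 1
        linarith
      · show (0:ℝ) <
          (625/35522)*R 0 0 + (10368/17761)*R 1 1 - (1800/17761)*R 2 2 + (169/120)*R 0 1
        linarith
      · show (0:ℝ) <
          (10368/17761)*R 0 0 - (1800/17761)*R 1 1 + (625/35522)*R 2 2 - (169/120)*R 0 2
        linarith
      · show (0:ℝ) <
          (10368/17761)*R 0 0 - (1800/17761)*R 1 1 + (625/35522)*R 2 2 + (169/120)*R 0 2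
        linarith
      · show (0:ℝ) <
          -(1800/17761)*R 0 0 + (625/35522)*R 1 1 + (10368/17761)*R 2 2 - (169/120)*R 1 2
        linarith
      · show (0:ℝ) <
          -(1800/17761)*R 0 0 + (625/35522)*R 1 1 + (10368/17761)*R 2 2 + (169/120)*R 1 2
        linarith
end
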